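/- arXiv:2102.12975 — 2 statements merged into one kernel-verified Lean document; each statement's English description precedes it below -/
import Mathlib

section
/- Fix a constant c > 0. For every ε > 0 there exists N such that for all n ≥ N: P( { i : w_i ≤ c } ⊆ { i : |Γ₁^{G₁}(i)| ≤ 5·log n and |Γ₁^{G₂}(i)| ≤ 5·log n } ⊆ { i : w_i ≤ (15/s)·log n } ) ≥ 1 − n^{ε−2}. -/
open MeasureTheory ProbabilityTheory Filter

noncomputable section

/-- The Chung–Lu weight of vertex `i : Fin n` (representing the index `i+1 ∈ {1,…,n}`),
with `i₀ = n·((β−2)·w̄/((β−1)·w_max(n)))^{β−1}`. -/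
def clWeight (wbar β : ℝ) (wmax : ℕ → ℝ) (n : ℕ) (i : Fin n) : ℝ :=
  wbar * ((β - 2) / (β - 1)) *
    ((n : ℝ) / (((i : ℕ) : ℝ) + 1 +
      (n : ℝ) * (((β - 2) * wbar / ((β - 1) * wmax n)) ^ (β - 1)))) ^ (1 / (β - 1))

/-- `α_k = n^γ / 2^k` for an integer `k`. -/
def alphaZ (γ : ℝ) (n : ℕ) (k : ℤ) : ℝ := (n : ℝ) ^ γ / 2 ^ k

/-- The constant `C = (2^{β−1}−1)·((β−2)·w̄/(β−1))^{β−1}`. -/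
def Cconst (wbar β : ℝ) : ℝ := (2 ^ (β - 1) - 1) * ((β - 2) * wbar / (β - 1)) ^ (β - 1)

/-- The constant `κ = (1+2δ)²·2^{5−β}·C/((2^{3−β}−1)·w̄)` with `δ = 1/8`. -/
def kappa (wbar β : ℝ) : ℝ :=
  (1 + 2 * (1/8 : ℝ)) ^ 2 * 2 ^ (5 - β) * Cconst wbar β / ((2 ^ (3 - β) - 1) * wbar)

/-- `k* = ⌊log₂( n^γ·(C·s²/(192·w̄·log n))^{1/(3−β)} )⌋`. -/
def kstar (wbar β s γ : ℝ) (n : ℕ) : ℤ :=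
  ⌊Real.logb 2 ((n : ℝ) ^ γ *
      (Cconst wbar β * s ^ 2 / (192 * wbar * Real.log n)) ^ (1 / (3 - β)))⌋

/-- `K = ⌈γ·log₂ n⌉`, the number of slices. -/
def Kconst (γ : ℝ) (n : ℕ) : ℤ := ⌈γ * Real.logb 2 n⌉

/-- The slice `P_k = { i : α_k ≤ w_i ≤ α_{k−1} }` for `k : ℕ`, with `α_{−1} = +∞` (i.e. for
`k = 0` there is no upper constraint). -/
def Pslice (wbar β γ : ℝ) (wmax : ℕ → ℝ) (n : ℕ) (k : ℕ) : Set (Fin n) :=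
  {i | alphaZ γ n k ≤ clWeight wbar β wmax n i ∧
    ∀ j : ℕ, k = j + 1 → clWeight wbar β wmax n i ≤ alphaZ γ n j}

/-- The slice `P_k = { i : α_k ≤ w_i ≤ α_{k−1} }` for an integer index `k`. -/
def PsliceZ (wbar β γ : ℝ) (wmax : ℕ → ℝ) (n : ℕ) (k : ℤ) : Set (Fin n) :=
  {i | alphaZ γ n k ≤ clWeight wbar β wmax n i ∧
    clWeight wbar β wmax n i ≤ alphaZ γ n (k - 1)}

/-- The enlarged slice `P̄_k = { i : (1−2δ)·α_k ≤ w_i ≤ (1+2δ)·α_{k−1} }` with `δ = 1/8`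
(no upper constraint for `k = 0` since `α_{−1} = +∞`). -/
def PbarSlice (wbar β γ : ℝ) (wmax : ℕ → ℝ) (n : ℕ) (k : ℕ) : Set (Fin n) :=
  {i | (1 - 2 * (1/8 : ℝ)) * alphaZ γ n k ≤ clWeight wbar β wmax n i ∧
    ∀ j : ℕ, k = j + 1 → clWeight wbar β wmax n i ≤ (1 + 2 * (1/8 : ℝ)) * alphaZ γ n j}

/-- The degree-based slice `P̂_k^G = { u : (1−δ)·α_k·s ≤ |Γ₁^G(u)| ≤ (1+δ)·α_{k−1}·s }`
with `δ = 1/8` (no upper constraint for `k = 0` since `α_{−1} = +∞`). -/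
def PhatSlice (γ s : ℝ) {n : ℕ} (G : SimpleGraph (Fin n)) (k : ℕ) : Set (Fin n) :=
  {u | (1 - (1/8 : ℝ)) * alphaZ γ n k * s ≤ ((G.neighborSet u).ncard : ℝ) ∧
    ∀ j : ℕ, k = j + 1 → ((G.neighborSet u).ncard : ℝ) ≤ (1 + (1/8 : ℝ)) * alphaZ γ n j * s}

/-- The subgraph of `G` induced on the vertex set `V` (kept as a graph on all of `Fin n`:
only edges with both endpoints in `V` are retained, so graph distances between vertices of `V`
agree with those in the induced subgraph). -/
def restrictG {n : ℕ} (G : SimpleGraph (Fin n)) (V : Set (Fin n)) : SimpleGraph (Fin n) where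
  Adj u v := G.Adj u v ∧ u ∈ V ∧ v ∈ V
  symm := ⟨fun u v h => ⟨h.1.symm, h.2.2, h.2.1⟩⟩
  loopless := ⟨fun u h => G.loopless.irrefl u h.1⟩

/-- Condition (★):
`n^{γ((3−β)(D−1)+1)} ≤ (C·s·(2^{3−β}−1)/(20·2^{3−β}))·(C·s²/(12·κ²·w̄))^D·n/(log n)^{3−β}`. -/
def starCond (wbar β s γ : ℝ) (D : ℕ) (n : ℕ) : Prop :=
  (n : ℝ) ^ (γ * ((3 - β) * ((D : ℝ) - 1) + 1)) ≤
    Cconst wbar β * s * (2 ^ (3 - β) - 1) / (20 * 2 ^ (3 - β)) *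
      (Cconst wbar β * s ^ 2 / (12 * kappa wbar β ^ 2 * wbar)) ^ D *
      (n : ℝ) / Real.log n ^ (3 - β)

/-- A pair of edge-correlated Chung–Lu random graphs `G 0, G 1` on `{1,…,n}`:
for each unordered pair `e` of distinct vertices there are events `A e`, `B 0 e`, `B 1 e`
with `P(A e) = w_i·w_j/(n·w̄)`, `P(B j e) = s`, the whole family being mutually independent,
and `G j` has edge set `{e : A e ∩ B j e occurs}`. -/
structure ChungLuPair (wbar β s : ℝ) (wmax : ℕ → ℝ) (n : ℕ)
    (Ω : Type) [MeasurableSpace Ω] where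
  μ : Measure Ω
  prob : IsProbabilityMeasure μ
  A : Sym2 (Fin n) → Set Ω
  B : Fin 2 → Sym2 (Fin n) → Set Ω
  Ameas : ∀ e, MeasurableSet (A e)
  Bmeas : ∀ j e, MeasurableSet (B j e)
  hA : ∀ u v : Fin n, u ≠ v →
    μ (A (Sym2.mk u v)) =
      ENNReal.ofReal (clWeight wbar β wmax n u * clWeight wbar β wmax n v / (n * wbar))
  hB : ∀ (j : Fin 2) (u v : Fin n), u ≠ v → μ (B j (Sym2.mk u v)) = ENNReal.ofReal s
  indep : iIndepSet
    (fun p : Sym2 (Fin n) × Option (Fin 2) => p.2.elim (A p.1) (fun j => B j p.1)) μ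
  G : Fin 2 → Ω → SimpleGraph (Fin n)
  hG : ∀ (j : Fin 2) (ω : Ω) (u v : Fin n),
    (G j ω).Adj u v ↔ u ≠ v ∧ ω ∈ A (Sym2.mk u v) ∧ ω ∈ B j (Sym2.mk u v)

/-- A single Chung–Lu random graph on `{1,…,n}` with edge probabilities `w_i·w_j·t/(n·w̄)`,
independently across unordered pairs of distinct vertices. -/
structure ChungLuSingle (wbar β t : ℝ) (wmax : ℕ → ℝ) (n : ℕ)
    (Ω : Type) [MeasurableSpace Ω] where
  μ : Measure Ω
  prob : IsProbabilityMeasure μ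
  E : Sym2 (Fin n) → Set Ω
  Emeas : ∀ e, MeasurableSet (E e)
  hE : ∀ u v : Fin n, u ≠ v →
    μ (E (Sym2.mk u v)) =
      ENNReal.ofReal (clWeight wbar β wmax n u * clWeight wbar β wmax n v * t / (n * wbar))
  indep : iIndepSet E μ
  G : Ω → SimpleGraph (Fin n)
  hG : ∀ (ω : Ω) (u v : Fin n), (G ω).Adj u v ↔ u ≠ v ∧ ω ∈ E (Sym2.mk u v)

/-- The random sets `S_0 = P_{k*}` and
`S_h = { u ∈ P_{k*+h} : |Γ₁^{G₁}(u) ∩ Γ₁^{G₂}(u) ∩ S_{h−1}| ≥ 3 }` for `h ≥ 1`. -/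
def Sset (wbar β γ : ℝ) (wmax : ℕ → ℝ) (n : ℕ) (kst : ℤ)
    (G1 G2 : SimpleGraph (Fin n)) : ℕ → Set (Fin n)
  | 0 => PsliceZ wbar β γ wmax n kst
  | h + 1 => {u | u ∈ PsliceZ wbar β γ wmax n (kst + (h : ℤ) + 1) ∧
      3 ≤ (G1.neighborSet u ∩ G2.neighborSet u ∩
        Sset wbar β γ wmax n kst G1 G2 h).ncard}

namespace Statement18Aux


variable {Ω : Type*} [MeasurableSpace Ω] {ι : Type*}

lemma indicator_biInter_eq (T : Finset ι) (C : ι → Set Ω) (ω : Ω) :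
    ∏ v ∈ T, (C v).indicator (fun _ => (1:ℝ)) ω
      = (⋂ v ∈ T, C v).indicator (fun _ => (1:ℝ)) ω := by
  classical
  by_cases h : ω ∈ ⋂ v ∈ T, C v
  · rw [Set.indicator_of_mem h]
    refine Finset.prod_eq_one fun v hv => ?_
    rw [Set.indicator_of_mem (Set.mem_iInter₂.mp h v hv)]
  · rw [Set.indicator_of_notMem h]
    obtain ⟨v, hv, hvmem⟩ : ∃ v ∈ T, ω ∉ C v := by
      by_contra hcon
      push_neg at hcon
      exact h (Set.mem_iInter₂.mpr hcon)
    exact Finset.prod_eq_zero hv (by rw [Set.indicator_of_notMem hvmem])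

lemma prod_one_add_indicator (V : Finset ι) (C : ι → Set Ω) (lam : ℝ) (ω : Ω) :
    ∏ v ∈ V, (1 + lam * (C v).indicator (fun _ => (1:ℝ)) ω)
      = ∑ T ∈ V.powerset, lam ^ T.card * (⋂ v ∈ T, C v).indicator (fun _ => (1:ℝ)) ω := by
  classical
  calc ∏ v ∈ V, (1 + lam * (C v).indicator (fun _ => (1:ℝ)) ω)
      = ∏ v ∈ V, ((fun v => lam * (C v).indicator (fun _ => (1:ℝ)) ω) v + (fun _ => (1:ℝ)) v) := by
        refine Finset.prod_congr rfl fun v _ => ?_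
        simp [add_comm]
    _ = ∑ T ∈ V.powerset, (∏ v ∈ T, lam * (C v).indicator (fun _ => (1:ℝ)) ω)
          * ∏ v ∈ V \ T, (1:ℝ) :=
        Finset.prod_add _ _ V
    _ = _ := by
        refine Finset.sum_congr rfl fun T hT => ?_
        rw [Finset.prod_const_one, mul_one, Finset.prod_mul_distrib, Finset.prod_const,
          indicator_biInter_eq]

lemma integral_prod_one_add_indicator (μ : Measure Ω) [IsProbabilityMeasure μ]
    (V : Finset ι) (C : ι → Set Ω) (hC : ∀ v, MeasurableSet (C v)) (lam : ℝ) :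
    ∫ ω, ∏ v ∈ V, (1 + lam * (C v).indicator (fun _ => (1:ℝ)) ω) ∂μ
      = ∑ T ∈ V.powerset, lam ^ T.card * (μ (⋂ v ∈ T, C v)).toReal := by
  classical
  have hmeas : ∀ T : Finset ι, MeasurableSet (⋂ v ∈ T, C v) :=
    fun T => Finset.measurableSet_biInter T (fun v _ => hC v)
  have hfun : (fun ω => ∏ v ∈ V, (1 + lam * (C v).indicator (fun _ => (1:ℝ)) ω))
      = fun ω => ∑ T ∈ V.powerset, lam ^ T.card
          * (⋂ v ∈ T, C v).indicator (fun _ => (1:ℝ)) ω := by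
    funext ω; exact prod_one_add_indicator V C lam ω
  rw [hfun, integral_finset_sum _ (fun T _ =>
    (((integrable_const (1:ℝ)).indicator (hmeas T)).const_mul _))]
  refine Finset.sum_congr rfl fun T _ => ?_
  rw [integral_const_mul, integral_indicator_const (1:ℝ) (hmeas T)]
  simp [measureReal_def]

lemma integral_eq_prod (μ : Measure Ω) [IsProbabilityMeasure μ]
    (V : Finset ι) (C : ι → Set Ω) (hC : ∀ v, MeasurableSet (C v)) (lam : ℝ)
    (hind : ∀ T ∈ V.powerset, μ (⋂ v ∈ T, C v) = ∏ v ∈ T, μ (C v)) :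
    ∫ ω, ∏ v ∈ V, (1 + lam * (C v).indicator (fun _ => (1:ℝ)) ω) ∂μ
      = ∏ v ∈ V, (1 + lam * (μ (C v)).toReal) := by
  classical
  rw [integral_prod_one_add_indicator μ V C hC lam]
  have hcongr : ∀ T ∈ V.powerset, lam ^ T.card * (μ (⋂ v ∈ T, C v)).toReal
      = (∏ v ∈ T, (fun v => lam * (μ (C v)).toReal) v) * ∏ v ∈ V \ T, (fun _ => (1:ℝ)) v := by
    intro T hT
    rw [hind T hT, ENNReal.toReal_prod, Finset.prod_const_one, mul_one,
      Finset.prod_mul_distrib, Finset.prod_const]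
  rw [Finset.sum_congr rfl hcongr, ← Finset.prod_add]
  refine Finset.prod_congr rfl fun v _ => ?_
  simp [add_comm]

lemma prod_eq_rpow_sum (V : Finset ι) (C : ι → Set Ω) {q : ℝ} (hq : 0 < q) (ω : Ω) :
    ∏ v ∈ V, (1 + (q - 1) * (C v).indicator (fun _ => (1:ℝ)) ω)
      = q ^ (∑ v ∈ V, (C v).indicator (fun _ => (1:ℝ)) ω) := by
  classical
  induction V using Finset.cons_induction with
  | empty => simp
  | cons v V hv ih =>
    rw [Finset.prod_cons, Finset.sum_cons, ih, Real.rpow_add hq]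
    congr 1
    by_cases h : ω ∈ C v
    · rw [Set.indicator_of_mem h, Real.rpow_one]; ring
    · rw [Set.indicator_of_notMem h, Real.rpow_zero]; ring

lemma chernoff_core (μ : Measure Ω) [IsProbabilityMeasure μ]
    (V : Finset ι) (C : ι → Set Ω) (hC : ∀ v, MeasurableSet (C v))
    (hind : ∀ T ∈ V.powerset, μ (⋂ v ∈ T, C v) = ∏ v ∈ T, μ (C v))
    (q a : ℝ) (hq : 0 < q) (S : Set Ω)
    (hS : ∀ ω ∈ S, q ^ a ≤ ∏ v ∈ V, (1 + (q - 1) * (C v).indicator (fun _ => (1:ℝ)) ω)) :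
    μ S ≤ ENNReal.ofReal (q ^ (-a) * ∏ v ∈ V, (1 + (q - 1) * (μ (C v)).toReal)) := by
  classical
  set f : Ω → ℝ := fun ω => ∏ v ∈ V, (1 + (q - 1) * (C v).indicator (fun _ => (1:ℝ)) ω) with hf
  have hnonneg : ∀ ω, 0 ≤ f ω := by
    intro ω
    have hfω : f ω = q ^ (∑ v ∈ V, (C v).indicator (fun _ => (1:ℝ)) ω) :=
      prod_eq_rpow_sum V C hq ω
    rw [hfω]
    exact (Real.rpow_pos_of_pos hq _).le
  have hint : Integrable f μ := by
    have : f = fun ω => ∑ T ∈ V.powerset, (q - 1) ^ T.card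
        * (⋂ v ∈ T, C v).indicator (fun _ => (1:ℝ)) ω := by
      funext ω; exact prod_one_add_indicator V C (q - 1) ω
    rw [this]
    exact integrable_finset_sum _ fun T _ =>
      ((integrable_const (1:ℝ)).indicator
        (Finset.measurableSet_biInter T fun v _ => hC v)).const_mul _
  have hqa : (0:ℝ) < q ^ a := Real.rpow_pos_of_pos hq a
  have hmarkov := mul_meas_ge_le_integral_of_nonneg
    (Filter.Eventually.of_forall hnonneg) hint (q ^ a)
  have hsub : μ S ≤ μ {ω | q ^ a ≤ f ω} := measure_mono hS
  have h1 : (μ {ω | q ^ a ≤ f ω}).toReal ≤ q ^ (-a) * ∫ ω, f ω ∂μ := by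
    rw [Real.rpow_neg hq.le]
    rw [← le_div_iff₀' hqa] at hmarkov
    exact hmarkov.trans_eq (div_eq_inv_mul _ _)
  have h2 : μ {ω | q ^ a ≤ f ω} ≤ ENNReal.ofReal (q ^ (-a) * ∫ ω, f ω ∂μ) := by
    rw [← ENNReal.ofReal_toReal (measure_ne_top μ _)]
    exact ENNReal.ofReal_le_ofReal h1
  refine hsub.trans (h2.trans_eq ?_)
  rw [show (∫ ω, f ω ∂μ) = ∏ v ∈ V, (1 + (q - 1) * (μ (C v)).toReal) from
    integral_eq_prod μ V C hC (q - 1) hind]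

lemma chernoff_ub (μ : Measure Ω) [IsProbabilityMeasure μ]
    (V : Finset ι) (C : ι → Set Ω) (hC : ∀ v, MeasurableSet (C v))
    (hind : ∀ T ∈ V.powerset, μ (⋂ v ∈ T, C v) = ∏ v ∈ T, μ (C v))
    (q a : ℝ) (hq1 : 1 ≤ q) :
    μ {ω | a ≤ ∑ v ∈ V, (C v).indicator (fun _ => (1:ℝ)) ω}
      ≤ ENNReal.ofReal (q ^ (-a) * ∏ v ∈ V, (1 + (q - 1) * (μ (C v)).toReal)) := by
  have hq : (0:ℝ) < q := lt_of_lt_of_le one_pos hq1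
  refine chernoff_core μ V C hC hind q a hq _ fun ω hω => ?_
  rw [prod_eq_rpow_sum V C hq ω]
  exact Real.rpow_le_rpow_of_exponent_le hq1 hω

lemma chernoff_lb (μ : Measure Ω) [IsProbabilityMeasure μ]
    (V : Finset ι) (C : ι → Set Ω) (hC : ∀ v, MeasurableSet (C v))
    (hind : ∀ T ∈ V.powerset, μ (⋂ v ∈ T, C v) = ∏ v ∈ T, μ (C v))
    (q a : ℝ) (hq : 0 < q) (hq1 : q ≤ 1) :
    μ {ω | ∑ v ∈ V, (C v).indicator (fun _ => (1:ℝ)) ω ≤ a}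
      ≤ ENNReal.ofReal (q ^ (-a) * ∏ v ∈ V, (1 + (q - 1) * (μ (C v)).toReal)) := by
  refine chernoff_core μ V C hC hind q a hq _ fun ω hω => ?_
  rw [prod_eq_rpow_sum V C hq ω]
  exact Real.rpow_le_rpow_of_exponent_ge hq hq1 hω

lemma ncard_eq_sum_ind {ι : Type*} (D : Set ι) (V : Finset ι) (C : ι → Set Ω) (ω : Ω)
    (h : ∀ v, v ∈ D ↔ v ∈ V ∧ ω ∈ C v) :
    ((D.ncard : ℝ)) = ∑ v ∈ V, (C v).indicator (fun _ => (1:ℝ)) ω := by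
  classical
  have hD : D = ↑(V.filter fun v => ω ∈ C v) := by
    ext v; simp [h v, Finset.mem_filter]
  have hval : ∀ v ∈ V, (C v).indicator (fun _ => (1:ℝ)) ω
      = if ω ∈ C v then (1:ℝ) else 0 := by
    intro v _
    by_cases hv : ω ∈ C v <;> simp [hv]
  rw [hD, Set.ncard_coe_finset, Finset.sum_congr rfl hval, Finset.sum_boole]



lemma rpow_sub_rpow_le {r x y : ℝ} (hr0 : 0 ≤ r) (hr1 : r ≤ 1) (hx : 0 < x) (hxy : x ≤ y) :
    y ^ r - x ^ r ≤ r * x ^ (r - 1) * (y - x) := by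
  have hs : (-1:ℝ) ≤ (y - x) / x := by
    have : (0:ℝ) ≤ (y - x) / x := div_nonneg (by linarith) hx.le
    linarith
  have h := rpow_one_add_le_one_add_mul_self hs hr0 hr1
  have hxne : x ≠ 0 := ne_of_gt hx
  have hy : 1 + (y - x) / x = y / x := by field_simp; ring
  rw [hy, Real.div_rpow (le_trans hx.le hxy) hx.le] at h
  have hxr : 0 < x ^ r := Real.rpow_pos_of_pos hx r
  rw [div_le_iff₀ hxr] at h
  have hxr1 : x ^ (r - 1) = x ^ r / x := by
    rw [Real.rpow_sub hx, Real.rpow_one]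
  rw [hxr1]
  have heq : (1 + r * ((y - x) / x)) * x ^ r - x ^ r = r * (x ^ r / x) * (y - x) := by
    field_simp
    ring
  linarith [heq]

lemma le_rpow_sub_rpow {r x y : ℝ} (hr0 : 0 ≤ r) (hr1 : r ≤ 1) (hx : 0 ≤ x) (hy : 0 < y)
    (hxy : x ≤ y) :
    r * y ^ (r - 1) * (y - x) ≤ y ^ r - x ^ r := by
  have hs : (-1:ℝ) ≤ (x - y) / y := by
    rw [le_div_iff₀ hy]; linarith
  have h := rpow_one_add_le_one_add_mul_self hs hr0 hr1
  have hyne : y ≠ 0 := ne_of_gt hy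
  have hxy' : 1 + (x - y) / y = x / y := by field_simp; ring
  rw [hxy', Real.div_rpow hx hy.le] at h
  have hyr : 0 < y ^ r := Real.rpow_pos_of_pos hy r
  rw [div_le_iff₀ hyr] at h
  have heq : (1 + r * ((x - y) / y)) * y ^ r = y ^ r + r * (y ^ r / y) * (x - y) := by
    field_simp
  rw [heq] at h
  have hyr1 : y ^ (r - 1) = y ^ r / y := by
    rw [Real.rpow_sub hy, Real.rpow_one]
  rw [hyr1]
  linarith

lemma sum_rpow_neg_le {al r : ℝ} (h : al + r = 1) (h0 : 0 < al) (hr : 0 < r) (n : ℕ) :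
    ∑ v ∈ Finset.range n, ((v:ℝ) + 1) ^ (-al) ≤ 1 + (n:ℝ) ^ r / r := by
  cases n with
  | zero =>
    simp [Real.zero_rpow hr.ne']
  | succ m =>
    rw [Finset.sum_range_succ']
    push_cast
    have hterm : ∀ i ∈ Finset.range m, ((i:ℝ) + 1 + 1) ^ (-al)
        ≤ (((i:ℝ) + 1 + 1) ^ r - ((i:ℝ) + 1) ^ r) / r := by
      intro i _
      rw [le_div_iff₀ hr]
      have hb := le_rpow_sub_rpow hr.le (by linarith) (by positivity : (0:ℝ) ≤ (i:ℝ) + 1)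
        (by positivity : (0:ℝ) < (i:ℝ) + 1 + 1) (by linarith)
      have heq : r * ((i:ℝ) + 1 + 1) ^ (r - 1) * (((i:ℝ) + 1 + 1) - ((i:ℝ) + 1))
          = ((i:ℝ) + 1 + 1) ^ (-al) * r := by
        rw [show r - 1 = -al by linarith]; ring
      linarith [hb, heq]
    have hsum := Finset.sum_le_sum hterm
    rw [← Finset.sum_div] at hsum
    have htel : ∑ i ∈ Finset.range m, (((i:ℝ) + 1 + 1) ^ r - ((i:ℝ) + 1) ^ r)
        = ((m:ℝ) + 1) ^ r - 1 := by
      have h2 := Finset.sum_range_sub (fun k => ((k:ℝ) + 1) ^ r) m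
      push_cast at h2
      rw [h2]
      norm_num
    rw [htel, sub_div] at hsum
    have hone : ((0:ℝ) + 1) ^ (-al) = 1 := by norm_num
    rw [hone]
    have hrpos : 0 ≤ 1 / r := by positivity
    linarith

section Weights

variable {wbar β γ : ℝ} {wmax : ℕ → ℝ} {n : ℕ}

/-- the `i₀` quantity -/
def i0 (wbar β : ℝ) (wmax : ℕ → ℝ) (n : ℕ) : ℝ :=
  (n : ℝ) * (((β - 2) * wbar / ((β - 1) * wmax n)) ^ (β - 1))

lemma clWeight_eq (i : Fin n) :
    clWeight wbar β wmax n i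
      = wbar * ((β - 2) / (β - 1))
        * ((n : ℝ) / (((i : ℕ) : ℝ) + 1 + i0 wbar β wmax n)) ^ (1 / (β - 1)) := rfl

lemma i0_nonneg (hwbar : 0 < wbar) (hβl : 2 < β) (hβu : β < 3) (hwm : wbar ≤ wmax n) :
    0 ≤ i0 wbar β wmax n := by
  have hbase : 0 ≤ (β - 2) * wbar / ((β - 1) * wmax n) := by
    apply div_nonneg
    · nlinarith
    · nlinarith
  exact mul_nonneg (Nat.cast_nonneg n) (Real.rpow_nonneg hbase _)

lemma clWeight_nonneg (hwbar : 0 < wbar) (hβl : 2 < β) (hβu : β < 3) (hwm : wbar ≤ wmax n)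
    (i : Fin n) : 0 ≤ clWeight wbar β wmax n i := by
  rw [clWeight_eq]
  have h1 : (0:ℝ) ≤ (n : ℝ) / (((i : ℕ) : ℝ) + 1 + i0 wbar β wmax n) := by
    apply div_nonneg (Nat.cast_nonneg n)
    have h0 := i0_nonneg hwbar hβl hβu hwm (n := n)
    have h1 : (0:ℝ) ≤ ((i : ℕ) : ℝ) := Nat.cast_nonneg _
    linarith
  have h2 : (0:ℝ) ≤ (β - 2) / (β - 1) := by
    apply div_nonneg <;> nlinarith
  exact mul_nonneg (mul_nonneg hwbar.le h2) (Real.rpow_nonneg h1 _)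

lemma clWeight_le (hwbar : 0 < wbar) (hβl : 2 < β) (hβu : β < 3) (hwm : wbar ≤ wmax n)
    (i : Fin n) : clWeight wbar β wmax n i ≤ wbar * (n:ℝ) ^ (1 / (β - 1)) := by
  rw [clWeight_eq]
  have hi0 := i0_nonneg hwbar hβl hβu hwm (n := n)
  have hden : (1:ℝ) ≤ ((i : ℕ) : ℝ) + 1 + i0 wbar β wmax n := by
    have h1 : (0:ℝ) ≤ ((i : ℕ) : ℝ) := Nat.cast_nonneg _
    linarith
  have hbase : (n : ℝ) / (((i : ℕ) : ℝ) + 1 + i0 wbar β wmax n) ≤ (n:ℝ) := by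
    rw [div_le_iff₀ (by linarith)]
    nlinarith [Nat.cast_nonneg (α := ℝ) n]
  have hbase0 : (0:ℝ) ≤ (n : ℝ) / (((i : ℕ) : ℝ) + 1 + i0 wbar β wmax n) := by
    apply div_nonneg (Nat.cast_nonneg n); linarith
  have hal : (0:ℝ) ≤ 1 / (β - 1) := le_of_lt (div_pos one_pos (by linarith))
  have h1 : ((n : ℝ) / (((i : ℕ) : ℝ) + 1 + i0 wbar β wmax n)) ^ (1 / (β - 1))
      ≤ (n:ℝ) ^ (1 / (β - 1)) := Real.rpow_le_rpow hbase0 hbase hal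
  have h2 : (β - 2) / (β - 1) ≤ 1 := by
    rw [div_le_one (by linarith)]; linarith
  have h3 : (0:ℝ) ≤ (β - 2) / (β - 1) := by apply div_nonneg <;> linarith
  have h4 : (0:ℝ) ≤ ((n : ℝ) / (((i : ℕ) : ℝ) + 1 + i0 wbar β wmax n)) ^ (1 / (β - 1)) :=
    Real.rpow_nonneg hbase0 _
  calc wbar * ((β - 2) / (β - 1))
        * ((n : ℝ) / (((i : ℕ) : ℝ) + 1 + i0 wbar β wmax n)) ^ (1 / (β - 1))
      = wbar * (((β - 2) / (β - 1))
        * ((n : ℝ) / (((i : ℕ) : ℝ) + 1 + i0 wbar β wmax n)) ^ (1 / (β - 1))) := by ring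
    _ ≤ wbar * (1 * (n:ℝ) ^ (1 / (β - 1))) :=
        mul_le_mul_of_nonneg_left (mul_le_mul h2 h1 h4 zero_le_one) hwbar.le
    _ = wbar * (n:ℝ) ^ (1 / (β - 1)) := by ring

lemma sum_clWeight_le (hwbar : 0 < wbar) (hβl : 2 < β) (hβu : β < 3) (hwm : wbar ≤ wmax n)
    (hn : 2 ≤ n) :
    ∑ v : Fin n, clWeight wbar β wmax n v ≤ 2 * wbar * n := by
  have hβ1 : (1:ℝ) < β - 1 := by linarith
  set al := 1 / (β - 1) with hal
  set rr := (β - 2) / (β - 1) with hrr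
  have hne : β - 1 ≠ 0 := by linarith
  have hsum1 : al + rr = 1 := by
    rw [hal, hrr, ← add_div, div_eq_one_iff_eq hne]; ring
  have hal0 : 0 < al := by rw [hal]; exact div_pos one_pos (by linarith)
  have hal1 : al < 1 := by rw [hal, div_lt_one (by linarith)]; linarith
  have hrr0 : 0 < rr := by rw [hrr]; exact div_pos (by linarith) (by linarith)
  have hrr1 : rr ≤ 1 := by rw [hrr, div_le_one (by linarith)]; linarith
  have hi0 := i0_nonneg hwbar hβl hβu hwm (n := n)
  have hn0 : (0:ℝ) < n := by positivity
  have hn1 : (1:ℝ) ≤ n := by exact_mod_cast Nat.one_le_of_lt hn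
  set g : ℕ → ℝ := fun m =>
    wbar * rr * ((n : ℝ) / ((m : ℝ) + 1 + i0 wbar β wmax n)) ^ al with hg
  have hconv : ∑ v : Fin n, clWeight wbar β wmax n v = ∑ m ∈ Finset.range n, g m :=
    Fin.sum_univ_eq_sum_range g n
  rw [hconv]
  have hterm : ∀ m ∈ Finset.range n, g m ≤ wbar * rr * ((n:ℝ) ^ al * ((m:ℝ) + 1) ^ (-al)) := by
    intro m _
    show wbar * rr * ((n : ℝ) / ((m : ℝ) + 1 + i0 wbar β wmax n)) ^ al ≤ _
    have hm0 : (0:ℝ) < (m:ℝ) + 1 := by positivity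
    have hbase : (n : ℝ) / ((m : ℝ) + 1 + i0 wbar β wmax n) ≤ (n:ℝ) / ((m:ℝ) + 1) := by
      apply div_le_div_of_nonneg_left hn0.le hm0
      linarith
    have hbase0 : (0:ℝ) ≤ (n : ℝ) / ((m : ℝ) + 1 + i0 wbar β wmax n) := by
      apply div_nonneg hn0.le; linarith
    have h1 : ((n : ℝ) / ((m : ℝ) + 1 + i0 wbar β wmax n)) ^ al
        ≤ ((n:ℝ) / ((m:ℝ) + 1)) ^ al := Real.rpow_le_rpow hbase0 hbase hal0.le
    have h2 : ((n:ℝ) / ((m:ℝ) + 1)) ^ al = (n:ℝ) ^ al * ((m:ℝ) + 1) ^ (-al) := by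
      rw [Real.div_rpow hn0.le hm0.le, Real.rpow_neg hm0.le, div_eq_mul_inv]
    rw [← h2]
    have : (0:ℝ) ≤ wbar * rr := by positivity
    exact mul_le_mul_of_nonneg_left h1 this
  calc ∑ m ∈ Finset.range n, g m
      ≤ ∑ m ∈ Finset.range n, wbar * rr * ((n:ℝ) ^ al * ((m:ℝ) + 1) ^ (-al)) :=
        Finset.sum_le_sum hterm
    _ = wbar * rr * (n:ℝ) ^ al * ∑ m ∈ Finset.range n, ((m:ℝ) + 1) ^ (-al) := by
        rw [Finset.mul_sum]; congr 1; funext m; ring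
    _ ≤ wbar * rr * (n:ℝ) ^ al * (1 + (n:ℝ) ^ rr / rr) := by
        apply mul_le_mul_of_nonneg_left (sum_rpow_neg_le hsum1 hal0 hrr0 n)
        positivity
    _ = wbar * rr * (n:ℝ) ^ al + wbar * ((n:ℝ) ^ al * (n:ℝ) ^ rr) := by
        field_simp
    _ ≤ 2 * wbar * n := by
        have hnal : (n:ℝ) ^ al ≤ n := by
          calc (n:ℝ) ^ al ≤ (n:ℝ) ^ (1:ℝ) :=
            Real.rpow_le_rpow_of_exponent_le hn1 (by linarith)
          _ = n := Real.rpow_one _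
        have hmul : (n:ℝ) ^ al * (n:ℝ) ^ rr = n := by
          rw [← Real.rpow_add hn0, hsum1, Real.rpow_one]
        rw [hmul]
        have h1 : wbar * rr * (n:ℝ) ^ al ≤ wbar * n := by
          have h2 : rr * (n:ℝ) ^ al ≤ 1 * n := by
            apply mul_le_mul hrr1 hnal (Real.rpow_nonneg hn0.le _) zero_le_one
          nlinarith
        linarith

lemma sum_clWeight_ge (hwbar : 0 < wbar) (hβl : 2 < β) (hβu : β < 3) (hwm : wbar ≤ wmax n)
    (hn : 2 ≤ n) :
    wbar * n - wbar * (n:ℝ) ^ (1/(β-1)) * (1 + i0 wbar β wmax n) ^ ((β-2)/(β-1))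
      ≤ ∑ v : Fin n, clWeight wbar β wmax n v := by
  have hβ1 : (1:ℝ) < β - 1 := by linarith
  set al := 1 / (β - 1) with hal
  set rr := (β - 2) / (β - 1) with hrr
  have hne : β - 1 ≠ 0 := by linarith
  have hsum1 : al + rr = 1 := by
    rw [hal, hrr, ← add_div, div_eq_one_iff_eq hne]; ring
  have hal0 : 0 < al := by rw [hal]; exact div_pos one_pos (by linarith)
  have hrr0 : 0 < rr := by rw [hrr]; exact div_pos (by linarith) (by linarith)
  have hrr1 : rr ≤ 1 := by rw [hrr, div_le_one (by linarith)]; linarith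
  have hi0 := i0_nonneg hwbar hβl hβu hwm (n := n)
  have hn0 : (0:ℝ) < n := by positivity
  set c0 := i0 wbar β wmax n with hc0
  set g : ℕ → ℝ := fun m => wbar * rr * ((n : ℝ) / ((m : ℝ) + 1 + c0)) ^ al with hg
  have hconv : ∑ v : Fin n, clWeight wbar β wmax n v = ∑ m ∈ Finset.range n, g m :=
    Fin.sum_univ_eq_sum_range g n
  rw [hconv]
  have hterm : ∀ m ∈ Finset.range n,
      wbar * (n:ℝ) ^ al * ((((m:ℝ) + 1 + 1 + c0) ^ rr - ((m:ℝ) + 1 + c0) ^ rr)) ≤ g m := by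
    intro m _
    have hx : (0:ℝ) < (m:ℝ) + 1 + c0 := by positivity
    have hy : (0:ℝ) < (m:ℝ) + 1 + 1 + c0 := by positivity
    have hb := rpow_sub_rpow_le hrr0.le hrr1 hx (by linarith : (m:ℝ) + 1 + c0 ≤ (m:ℝ) + 1 + 1 + c0)
    have hdiff : ((m:ℝ) + 1 + 1 + c0) - ((m:ℝ) + 1 + c0) = 1 := by ring
    rw [hdiff, mul_one] at hb
    have hral : rr - 1 = -al := by linarith
    rw [hral] at hb
    -- hb : (m+2+c0)^rr - (m+1+c0)^rr ≤ rr * (m+1+c0)^(-al)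
    show _ ≤ wbar * rr * ((n : ℝ) / ((m : ℝ) + 1 + c0)) ^ al
    have h2 : ((n:ℝ) / ((m:ℝ) + 1 + c0)) ^ al = (n:ℝ) ^ al * ((m:ℝ) + 1 + c0) ^ (-al) := by
      rw [Real.div_rpow hn0.le hx.le, Real.rpow_neg hx.le, div_eq_mul_inv]
    rw [h2]
    have h3 : (0:ℝ) ≤ wbar * (n:ℝ) ^ al := by positivity
    calc wbar * (n:ℝ) ^ al * (((m:ℝ) + 1 + 1 + c0) ^ rr - ((m:ℝ) + 1 + c0) ^ rr)
        ≤ wbar * (n:ℝ) ^ al * (rr * ((m:ℝ) + 1 + c0) ^ (-al)) :=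
          mul_le_mul_of_nonneg_left hb h3
      _ = wbar * rr * ((n:ℝ) ^ al * ((m:ℝ) + 1 + c0) ^ (-al)) := by ring
  have hsum := Finset.sum_le_sum hterm
  have htel : ∑ m ∈ Finset.range n,
      wbar * (n:ℝ) ^ al * ((((m:ℝ) + 1 + 1 + c0) ^ rr - ((m:ℝ) + 1 + c0) ^ rr))
      = wbar * (n:ℝ) ^ al * (((n:ℝ) + 1 + c0) ^ rr - (1 + c0) ^ rr) := by
    rw [← Finset.mul_sum]
    congr 1
    have h2 := Finset.sum_range_sub (fun k => ((k:ℝ) + 1 + c0) ^ rr) n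
    push_cast at h2
    rw [h2]
    norm_num
  rw [htel] at hsum
  refine le_trans ?_ hsum
  have h5 : (n:ℝ) ^ rr - (1 + c0) ^ rr ≤ ((n:ℝ) + 1 + c0) ^ rr - (1 + c0) ^ rr := by
    have : (n:ℝ) ^ rr ≤ ((n:ℝ) + 1 + c0) ^ rr :=
      Real.rpow_le_rpow hn0.le (by linarith) hrr0.le
    linarith
  have h6 : 0 ≤ wbar * (n:ℝ) ^ al := by positivity
  have hmul : (n:ℝ) ^ al * (n:ℝ) ^ rr = n := by
    rw [← Real.rpow_add hn0, hsum1, Real.rpow_one]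
  calc wbar * (n:ℝ) - wbar * (n:ℝ) ^ al * (1 + c0) ^ rr
      = wbar * ((n:ℝ) ^ al * (n:ℝ) ^ rr) - wbar * (n:ℝ) ^ al * (1 + c0) ^ rr := by rw [hmul]
    _ = wbar * (n:ℝ) ^ al * ((n:ℝ) ^ rr - (1 + c0) ^ rr) := by ring
    _ ≤ wbar * (n:ℝ) ^ al * (((n:ℝ) + 1 + c0) ^ rr - (1 + c0) ^ rr) :=
        mul_le_mul_of_nonneg_left h5 h6

end Weights




section I0

variable {wbar β γ : ℝ} {wmax : ℕ → ℝ} {n : ℕ}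

lemma i0_le (hwbar : 0 < wbar) (hβl : 2 < β) (hβu : β < 3) (hγ0 : 0 < γ)
    (hwm : wbar ≤ wmax n) (hwg : (n:ℝ) ^ γ ≤ wmax n) (hn : 2 ≤ n) :
    i0 wbar β wmax n ≤ ((β - 2) * wbar / (β - 1)) ^ (β - 1) * (n:ℝ) ^ (1 - γ * (β - 1)) := by
  have hn0 : (0:ℝ) < n := by positivity
  have hb : (0:ℝ) < (β - 2) * wbar / (β - 1) := div_pos (by nlinarith) (by linarith)
  have hnγ : (0:ℝ) < (n:ℝ) ^ γ := Real.rpow_pos_of_pos hn0 γ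
  have hwmax0 : (0:ℝ) < wmax n := lt_of_lt_of_le hwbar hwm
  have hbase : (β - 2) * wbar / ((β - 1) * wmax n)
      = ((β - 2) * wbar / (β - 1)) / wmax n := by
    field_simp
  have hmono : (β - 2) * wbar / ((β - 1) * wmax n)
      ≤ ((β - 2) * wbar / (β - 1)) / (n:ℝ) ^ γ := by
    rw [hbase]
    exact div_le_div_of_nonneg_left hb.le hnγ hwg
  have hbase0 : (0:ℝ) ≤ (β - 2) * wbar / ((β - 1) * wmax n) := by
    rw [hbase]; positivity
  have h1 : ((β - 2) * wbar / ((β - 1) * wmax n)) ^ (β - 1)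
      ≤ (((β - 2) * wbar / (β - 1)) / (n:ℝ) ^ γ) ^ (β - 1) :=
    Real.rpow_le_rpow hbase0 hmono (by linarith)
  have h2 : (((β - 2) * wbar / (β - 1)) / (n:ℝ) ^ γ) ^ (β - 1)
      = ((β - 2) * wbar / (β - 1)) ^ (β - 1) / ((n:ℝ) ^ γ) ^ (β - 1) :=
    Real.div_rpow hb.le hnγ.le _
  have h3 : ((n:ℝ) ^ γ) ^ (β - 1) = (n:ℝ) ^ (γ * (β - 1)) := (Real.rpow_mul hn0.le _ _).symm
  have h4 : i0 wbar β wmax n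
      ≤ (n:ℝ) * (((β - 2) * wbar / (β - 1)) ^ (β - 1) / (n:ℝ) ^ (γ * (β - 1))) := by
    unfold i0
    rw [← h3, ← h2]
    exact mul_le_mul_of_nonneg_left h1 hn0.le
  calc i0 wbar β wmax n
      ≤ (n:ℝ) * (((β - 2) * wbar / (β - 1)) ^ (β - 1) / (n:ℝ) ^ (γ * (β - 1))) := h4
    _ = ((β - 2) * wbar / (β - 1)) ^ (β - 1) * ((n:ℝ) ^ (1:ℝ) / (n:ℝ) ^ (γ * (β - 1))) := by
        rw [Real.rpow_one]; ring
    _ = ((β - 2) * wbar / (β - 1)) ^ (β - 1) * (n:ℝ) ^ (1 - γ * (β - 1)) := by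
        rw [← Real.rpow_sub hn0]

end I0


section Combine

variable {wbar β γ : ℝ} {wmax : ℕ → ℝ} {n : ℕ}

lemma erase_sum_ge (hwbar : 0 < wbar) (hβl : 2 < β) (hβu : β < 3) (hγ0 : 0 < γ)
    (hγh : γ < 1/2) (hwm : wbar ≤ wmax n) (hwg : (n:ℝ) ^ γ ≤ wmax n) (hn : 2 ≤ n)
    (hbig : 15 * (2 + ((β - 2) * wbar / (β - 1)) ^ (β - 1))
      ≤ (n:ℝ) ^ ((β - 2) / (β - 1) * (γ * (β - 1)))) (i : Fin n) :
    14 / 15 * (wbar * n) ≤ ∑ v ∈ Finset.univ.erase i, clWeight wbar β wmax n v := by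
  have hβ1 : (1:ℝ) < β - 1 := by linarith
  have hn0 : (0:ℝ) < n := by positivity
  have hn1 : (1:ℝ) ≤ n := by exact_mod_cast Nat.one_le_of_lt hn
  have hsplit : (∑ v ∈ Finset.univ.erase i, clWeight wbar β wmax n v)
      + clWeight wbar β wmax n i = ∑ v : Fin n, clWeight wbar β wmax n v :=
    Finset.sum_erase_add _ _ (Finset.mem_univ i)
  have hge := sum_clWeight_ge hwbar hβl hβu hwm hn
  have hle := clWeight_le hwbar hβl hβu hwm i
  have hile := i0_le hwbar hβl hβu hγ0 hwm hwg hn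
  have hi0 := i0_nonneg hwbar hβl hβu hwm (n := n)
  set al := 1 / (β - 1) with hal
  set rr := (β - 2) / (β - 1) with hrr
  set c0 := i0 wbar β wmax n with hc0
  set D := ((β - 2) * wbar / (β - 1)) ^ (β - 1) with hD
  set δ := γ * (β - 1) with hδ
  have hne : β - 1 ≠ 0 := by linarith
  have hsum1 : al + rr = 1 := by
    rw [hal, hrr, ← add_div, div_eq_one_iff_eq hne]; ring
  have hal0 : 0 < al := by rw [hal]; exact div_pos one_pos (by linarith)
  have hrr0 : 0 < rr := by rw [hrr]; exact div_pos (by linarith) (by linarith)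
  have hrr1 : rr ≤ 1 := by rw [hrr, div_le_one (by linarith)]; linarith
  have hδ0 : 0 < δ := by rw [hδ]; exact mul_pos hγ0 (by linarith)
  have hδ1 : δ < 1 := by rw [hδ]; nlinarith
  have hD0 : (0:ℝ) ≤ D := by
    rw [hD]; exact Real.rpow_nonneg (le_of_lt (div_pos (by nlinarith) (by linarith))) _
  have hnal : (0:ℝ) ≤ (n:ℝ) ^ al := Real.rpow_nonneg hn0.le _
  have hone_le : (1:ℝ) ≤ (n:ℝ) ^ (1 - δ) := by
    calc (1:ℝ) = (n:ℝ) ^ (0:ℝ) := (Real.rpow_zero _).symm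
      _ ≤ (n:ℝ) ^ (1 - δ) := Real.rpow_le_rpow_of_exponent_le hn1 (by linarith)
  have h1 : 1 + c0 ≤ (1 + D) * (n:ℝ) ^ (1 - δ) := by nlinarith [hile, hone_le, hD0]
  have h2 : (1 + c0) ^ rr ≤ ((1 + D) * (n:ℝ) ^ (1 - δ)) ^ rr :=
    Real.rpow_le_rpow (by linarith) h1 hrr0.le
  have h3 : ((1 + D) * (n:ℝ) ^ (1 - δ)) ^ rr = (1 + D) ^ rr * ((n:ℝ) ^ (1 - δ)) ^ rr :=
    Real.mul_rpow (by linarith) (by positivity)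
  have h4 : (1 + D) ^ rr ≤ 1 + D := by
    calc (1 + D) ^ rr ≤ (1 + D) ^ (1:ℝ) :=
          Real.rpow_le_rpow_of_exponent_le (by linarith) hrr1
      _ = 1 + D := Real.rpow_one _
  have h5 : ((n:ℝ) ^ (1 - δ)) ^ rr = (n:ℝ) ^ ((1 - δ) * rr) := (Real.rpow_mul hn0.le _ _).symm
  have h6 : (1 + c0) ^ rr ≤ (1 + D) * (n:ℝ) ^ ((1 - δ) * rr) := by
    rw [h3, h5] at h2
    have hnp : (0:ℝ) ≤ (n:ℝ) ^ ((1 - δ) * rr) := Real.rpow_nonneg hn0.le _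
    exact h2.trans (mul_le_mul_of_nonneg_right h4 hnp)
  have h7 : (n:ℝ) ^ al * (n:ℝ) ^ ((1 - δ) * rr) = (n:ℝ) ^ (1 - rr * δ) := by
    rw [← Real.rpow_add hn0]
    congr 1
    linear_combination hsum1
  have h8 : (n:ℝ) ^ al ≤ (n:ℝ) ^ (1 - rr * δ) := by
    apply Real.rpow_le_rpow_of_exponent_le hn1
    have hmul : rr * δ ≤ rr := mul_le_of_le_one_right hrr0.le hδ1.le
    linarith
  have h6b : (n:ℝ) ^ al * (1 + c0) ^ rr ≤ (1 + D) * (n:ℝ) ^ (1 - rr * δ) := by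
    calc (n:ℝ) ^ al * (1 + c0) ^ rr
        ≤ (n:ℝ) ^ al * ((1 + D) * (n:ℝ) ^ ((1 - δ) * rr)) :=
          mul_le_mul_of_nonneg_left h6 hnal
      _ = (1 + D) * ((n:ℝ) ^ al * (n:ℝ) ^ ((1 - δ) * rr)) := by ring
      _ = (1 + D) * (n:ℝ) ^ (1 - rr * δ) := by rw [h7]
  have h9 : (n:ℝ) ^ al * ((1 + c0) ^ rr + 1) ≤ (2 + D) * (n:ℝ) ^ (1 - rr * δ) := by
    rw [mul_add, mul_one]
    linarith [h6b, h8]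
  have h10 : (2 + D) * (n:ℝ) ^ (1 - rr * δ) ≤ (n:ℝ) / 15 := by
    have hX : (0:ℝ) < (n:ℝ) ^ (1 - rr * δ) := Real.rpow_pos_of_pos hn0 _
    have hmul := mul_le_mul_of_nonneg_right hbig hX.le
    have hid : (n:ℝ) ^ (rr * δ) * (n:ℝ) ^ (1 - rr * δ) = n := by
      rw [← Real.rpow_add hn0]; norm_num
    rw [hid] at hmul
    linarith
  have hkey := mul_le_mul_of_nonneg_left (h9.trans h10) hwbar.le
  have hexp : wbar * ((n:ℝ) ^ al * ((1 + c0) ^ rr + 1))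
      = wbar * (n:ℝ) ^ al * (1 + c0) ^ rr + wbar * (n:ℝ) ^ al := by ring
  rw [hexp] at hkey
  have hdiv : wbar * ((n:ℝ) / 15) = wbar * (n:ℝ) / 15 := by ring
  linarith [hkey, hsplit, hge, hle]

end Combine

lemma pair_meas_biInter {wbar β s : ℝ} {wmax : ℕ → ℝ} {n : ℕ} {Ω : Type} [MeasurableSpace Ω]
    (P : ChungLuPair wbar β s wmax n Ω) (i : Fin n) (j : Fin 2) (T : Finset (Fin n))
    (hT : ∀ v ∈ T, v ≠ i) :
    P.μ (⋂ v ∈ T, (P.A (Sym2.mk i v) ∩ P.B j (Sym2.mk i v)))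
      = ∏ v ∈ T, (P.μ (P.A (Sym2.mk i v)) * P.μ (P.B j (Sym2.mk i v))) := by
  classical
  let f1 : Fin n → Sym2 (Fin n) × Option (Fin 2) := fun v => (Sym2.mk i v, none)
  let f2 : Fin n → Sym2 (Fin n) × Option (Fin 2) := fun v => (Sym2.mk i v, some j)
  have hmk : ∀ v ∈ T, ∀ u ∈ T, Sym2.mk i v = Sym2.mk i u → v = u := by
    intro v hv u hu h
    rcases Sym2.eq_iff.mp h with ⟨h1, h2⟩ | ⟨h1, h2⟩
    · exact h2
    · exact absurd h2 (hT v hv)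
  have hinj1 : ∀ v ∈ T, ∀ u ∈ T, f1 v = f1 u → v = u := fun v hv u hu h =>
    hmk v hv u hu (congrArg Prod.fst h)
  have hinj2 : ∀ v ∈ T, ∀ u ∈ T, f2 v = f2 u → v = u := fun v hv u hu h =>
    hmk v hv u hu (congrArg Prod.fst h)
  have hdisj : Disjoint (T.image f1) (T.image f2) := by
    rw [Finset.disjoint_left]
    rintro p hp1 hp2
    obtain ⟨v, _, rfl⟩ := Finset.mem_image.mp hp1
    obtain ⟨u, _, hu⟩ := Finset.mem_image.mp hp2
    exact absurd (congrArg Prod.snd hu) (by simp [f1, f2])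
  have hprod : P.μ (⋂ p ∈ T.image f1 ∪ T.image f2, p.2.elim (P.A p.1) (fun j' => P.B j' p.1))
      = ∏ p ∈ T.image f1 ∪ T.image f2, P.μ (p.2.elim (P.A p.1) (fun j' => P.B j' p.1)) :=
    P.indep.meas_biInter _
  have hset : (⋂ p ∈ T.image f1 ∪ T.image f2, p.2.elim (P.A p.1) (fun j' => P.B j' p.1))
      = ⋂ v ∈ T, (P.A (Sym2.mk i v) ∩ P.B j (Sym2.mk i v)) := by
    ext ω
    simp only [Set.mem_iInter, Set.mem_inter_iff, Finset.mem_union, Finset.mem_image]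
    constructor
    · intro h v hv
      exact ⟨h (f1 v) (Or.inl ⟨v, hv, rfl⟩), h (f2 v) (Or.inr ⟨v, hv, rfl⟩)⟩
    · rintro h p (⟨v, hv, rfl⟩ | ⟨v, hv, rfl⟩)
      · exact (h v hv).1
      · exact (h v hv).2
  rw [hset] at hprod
  rw [hprod, Finset.prod_union hdisj, Finset.prod_image hinj1, Finset.prod_image hinj2,
    ← Finset.prod_mul_distrib]
  exact Finset.prod_congr rfl fun v _ => rfl

end Statement18Aux

theorem statement_18
    (c : ℝ) (hc : 0 < c)
    (wbar β s γ : ℝ) (hwbar : 0 < wbar) (hβl : 2 < β) (hβu : β < 3)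
    (hs0 : 0 < s) (hs1 : s ≤ 1) (hγ0 : 0 < γ) (hγh : γ < 1/2)
    (wmax : ℕ → ℝ)
    (hwmax : ∀ n : ℕ, 2 ≤ n →
      wbar ≤ wmax n ∧ wmax n ≤ Real.sqrt (n * wbar) ∧ (n : ℝ) ^ γ ≤ wmax n)
    (Ω : ℕ → Type) [∀ n, MeasurableSpace (Ω n)]
    (M : ∀ n : ℕ, 2 ≤ n → ChungLuPair wbar β s wmax n (Ω n))
    (ε : ℝ) (hε : 0 < ε) :
    ∃ N : ℕ, ∀ (n : ℕ) (hn : 2 ≤ n), N ≤ n →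
      1 - (n : ℝ) ^ (ε - 2) ≤
        ((M n hn).μ {ω |
          {i : Fin n | clWeight wbar β wmax n i ≤ c} ⊆
            {i : Fin n | ((((M n hn).G 0 ω).neighborSet i).ncard : ℝ) ≤ 5 * Real.log n ∧
              ((((M n hn).G 1 ω).neighborSet i).ncard : ℝ) ≤ 5 * Real.log n} ∧
          {i : Fin n | ((((M n hn).G 0 ω).neighborSet i).ncard : ℝ) ≤ 5 * Real.log n ∧
              ((((M n hn).G 1 ω).neighborSet i).ncard : ℝ) ≤ 5 * Real.log n} ⊆
            {i : Fin n | clWeight wbar β wmax n i ≤ 15 / s * Real.log n}}).toReal := by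
  classical
  have hβ1 : (1:ℝ) < β - 1 := by linarith
  have hlt : Filter.Tendsto (fun m : ℕ => Real.log m) atTop atTop :=
    Real.tendsto_log_atTop.comp tendsto_natCast_atTop_atTop
  have hexp0 : 0 < (β - 2) / (β - 1) * (γ * (β - 1)) :=
    mul_pos (div_pos (by linarith) (by linarith)) (mul_pos hγ0 (by linarith))
  have hrt : Filter.Tendsto (fun m : ℕ => (m:ℝ) ^ ((β - 2) / (β - 1) * (γ * (β - 1))))
      atTop atTop :=
    (tendsto_rpow_atTop hexp0).comp tendsto_natCast_atTop_atTop
  have hev : ∀ᶠ m : ℕ in atTop, ((4:ℝ) ≤ Real.log m ∧ 8 * c / 3 ≤ Real.log m) ∧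
      15 * (2 + ((β - 2) * wbar / (β - 1)) ^ (β - 1))
        ≤ (m:ℝ) ^ ((β - 2) / (β - 1) * (γ * (β - 1))) :=
    ((hlt.eventually_ge_atTop 4).and (hlt.eventually_ge_atTop (8 * c / 3))).and
      (hrt.eventually_ge_atTop _)
  obtain ⟨N, hN⟩ := eventually_atTop.mp hev
  refine ⟨N, fun n hn hNn => ?_⟩
  obtain ⟨⟨hlog4, hlogc⟩, hbig⟩ := hN n hNn
  obtain ⟨hwm, hwsq, hwg⟩ := hwmax n hn
  set P := M n hn with hPdef
  haveI : IsProbabilityMeasure P.μ := P.prob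
  set L := Real.log n with hLdef
  have hn0 : (0:ℝ) < n := by
    have : (0:ℕ) < n := by omega
    exact_mod_cast this
  have hL0 : (0:ℝ) ≤ L := by linarith
  set w := clWeight wbar β wmax n with hwdef
  have hw0 : ∀ i, 0 ≤ w i := Statement18Aux.clWeight_nonneg hwbar hβl hβu hwm
  have hwle : ∀ i, w i ≤ wbar * (n:ℝ) ^ (1/(β-1)) :=
    Statement18Aux.clWeight_le hwbar hβl hβu hwm
  have hsumle : ∑ v : Fin n, w v ≤ 2 * wbar * n :=
    Statement18Aux.sum_clWeight_le hwbar hβl hβu hwm hn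
  have herase : ∀ i : Fin n, 14/15 * (wbar * n) ≤ ∑ v ∈ Finset.univ.erase i, w v :=
    Statement18Aux.erase_sum_ge hwbar hβl hβu hγ0 hγh hwm hwg hn hbig
  set C : Fin n → Fin 2 → Fin n → Set (Ω n) :=
    fun i j v => P.A (Sym2.mk i v) ∩ P.B j (Sym2.mk i v) with hCdef
  set V : Fin n → Finset (Fin n) := fun i => Finset.univ.erase i with hVdef
  set X : Fin n → Fin 2 → Ω n → ℝ :=
    fun i j ω => ∑ v ∈ V i, (C i j v).indicator (fun _ => (1:ℝ)) ω with hXdef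
  have hdeg : ∀ (j : Fin 2) (ω : Ω n) (i : Fin n),
      (((P.G j ω).neighborSet i).ncard : ℝ) = X i j ω := by
    intro j ω i
    apply Statement18Aux.ncard_eq_sum_ind
    intro v
    constructor
    · intro hv
      rcases (P.hG j ω i v).mp hv with ⟨hne, hA, hB⟩
      exact ⟨Finset.mem_erase.mpr ⟨hne.symm, Finset.mem_univ v⟩, hA, hB⟩
    · rintro ⟨hv, hA, hB⟩
      exact (P.hG j ω i v).mpr ⟨((Finset.mem_erase.mp hv).1).symm, hA, hB⟩
  have hCmeas : ∀ (i : Fin n) (j : Fin 2) (v : Fin n), MeasurableSet (C i j v) :=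
    fun i j v => (P.Ameas _).inter (P.Bmeas _ _)
  have hCint : ∀ (i : Fin n) (j : Fin 2), ∀ T ∈ (V i).powerset,
      P.μ (⋂ v ∈ T, C i j v) = ∏ v ∈ T, P.μ (C i j v) := by
    intro i j T hT
    have hTne : ∀ v ∈ T, v ≠ i := fun v hv =>
      (Finset.mem_erase.mp (Finset.mem_powerset.mp hT hv)).1
    rw [show (⋂ v ∈ T, C i j v)
        = ⋂ v ∈ T, (P.A (Sym2.mk i v) ∩ P.B j (Sym2.mk i v)) from rfl,
      Statement18Aux.pair_meas_biInter P i j T hTne]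
    refine Finset.prod_congr rfl fun v hv => ?_
    have h1 := Statement18Aux.pair_meas_biInter P i j {v}
      (by simpa using hTne v hv)
    simp only [Finset.set_biInter_singleton, Finset.prod_singleton] at h1
    exact h1.symm
  have hpval : ∀ (i : Fin n) (j : Fin 2) (v : Fin n), v ≠ i →
      (P.μ (C i j v)).toReal = w i * w v / ((n:ℝ) * wbar) * s := by
    intro i j v hv
    have h1 := Statement18Aux.pair_meas_biInter P i j {v} (by simpa using hv)
    simp only [Finset.set_biInter_singleton, Finset.prod_singleton] at h1
    have hx0 : (0:ℝ) ≤ w i * w v / ((n:ℝ) * wbar) :=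
      div_nonneg (mul_nonneg (hw0 i) (hw0 v)) (mul_nonneg hn0.le hwbar.le)
    rw [show C i j v = P.A (Sym2.mk i v) ∩ P.B j (Sym2.mk i v) from rfl, h1,
      P.hA i v (Ne.symm hv), P.hB j i v (Ne.symm hv), ← ENNReal.ofReal_mul hx0,
      ENNReal.toReal_ofReal (mul_nonneg hx0 hs0.le)]
  have hxle1 : ∀ i v : Fin n, v ≠ i → w i * w v / ((n:ℝ) * wbar) ≤ 1 := by
    intro i v hv
    have h1 := P.hA i v (Ne.symm hv)
    have h2 : P.μ (P.A (Sym2.mk i v)) ≤ 1 := prob_le_one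
    rw [h1] at h2
    exact ENNReal.ofReal_le_one.mp h2
  have hple1 : ∀ (i : Fin n) (j : Fin 2) (v : Fin n), v ≠ i →
      (P.μ (C i j v)).toReal ≤ 1 := by
    intro i j v hv
    rw [hpval i j v hv]
    have h1 := hxle1 i v hv
    have h2 : (0:ℝ) ≤ w i * w v / ((n:ℝ) * wbar) :=
      div_nonneg (mul_nonneg (hw0 i) (hw0 v)) (mul_nonneg hn0.le hwbar.le)
    calc w i * w v / ((n:ℝ) * wbar) * s ≤ 1 * 1 := mul_le_mul h1 hs1 hs0.le zero_le_one
      _ = 1 := by norm_num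
  have hnw : (0:ℝ) < (n:ℝ) * wbar := mul_pos hn0 hwbar
  have hpsum : ∀ (i : Fin n) (j : Fin 2),
      ∑ v ∈ V i, (P.μ (C i j v)).toReal
        = w i * s / ((n:ℝ) * wbar) * ∑ v ∈ V i, w v := by
    intro i j
    have he : ∀ v ∈ V i, (P.μ (C i j v)).toReal = w i * w v / ((n:ℝ) * wbar) * s :=
      fun v hv => hpval i j v (Finset.mem_erase.mp hv).1
    rw [Finset.sum_congr rfl he, Finset.mul_sum]
    exact Finset.sum_congr rfl fun v _ => by ring
  have hsum_p_ub : ∀ (i : Fin n) (j : Fin 2), w i ≤ c →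
      ∑ v ∈ V i, (P.μ (C i j v)).toReal ≤ 2 * c := by
    intro i j hwc
    rw [hpsum i j]
    have h1 : ∑ v ∈ V i, w v ≤ 2 * wbar * n :=
      le_trans (Finset.sum_le_sum_of_subset_of_nonneg (Finset.subset_univ _)
        (fun v _ _ => hw0 v)) hsumle
    have h1' : (0:ℝ) ≤ ∑ v ∈ V i, w v := Finset.sum_nonneg fun v _ => hw0 v
    have h2 : w i * s ≤ c := by
      calc w i * s ≤ c * 1 := mul_le_mul hwc hs1 hs0.le hc.le
        _ = c := by ring
    have h3 : w i * s / ((n:ℝ) * wbar) ≤ c / ((n:ℝ) * wbar) :=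
      (div_le_div_iff_of_pos_right hnw).mpr h2
    have h4 : (0:ℝ) ≤ w i * s / ((n:ℝ) * wbar) :=
      div_nonneg (mul_nonneg (hw0 i) hs0.le) hnw.le
    calc w i * s / ((n:ℝ) * wbar) * ∑ v ∈ V i, w v
        ≤ c / ((n:ℝ) * wbar) * (2 * wbar * n) :=
          mul_le_mul h3 h1 h1' (div_nonneg hc.le hnw.le)
      _ = 2 * c := by field_simp
  have hsum_p_lb : ∀ i : Fin n, 15 / s * L < w i →
      14 * L ≤ ∑ v ∈ V i, (P.μ (C i 0 v)).toReal := by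
    intro i hwi
    rw [hpsum i 0]
    have hws : 15 * L ≤ w i * s := by
      have h1 : 15 / s * L * s = 15 * L := by field_simp
      have h2 := mul_le_mul_of_nonneg_right hwi.le hs0.le
      rw [h1] at h2
      exact h2
    have hsum15 : 14/15 * (wbar * n) ≤ ∑ v ∈ V i, w v := herase i
    have hpos : (0:ℝ) ≤ 14/15 * (wbar * n) := by positivity
    calc (14:ℝ) * L = 15 * L / ((n:ℝ) * wbar) * (14/15 * (wbar * n)) := by
          field_simp
      _ ≤ w i * s / ((n:ℝ) * wbar) * (14/15 * (wbar * n)) :=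
          mul_le_mul_of_nonneg_right ((div_le_div_iff_of_pos_right hnw).mpr hws) hpos
      _ ≤ w i * s / ((n:ℝ) * wbar) * ∑ v ∈ V i, w v :=
          mul_le_mul_of_nonneg_left hsum15
            (div_nonneg (mul_nonneg (hw0 i) hs0.le) hnw.le)
  -- upper tail bound
  have hUB : ∀ (i : Fin n) (j : Fin 2), w i ≤ c →
      P.μ {ω | 5 * L < (((P.G j ω).neighborSet i).ncard : ℝ)}
        ≤ ENNReal.ofReal (Real.exp (-(7/2) * L)) := by
    intro i j hwc
    have hsub : {ω | 5 * L < (((P.G j ω).neighborSet i).ncard : ℝ)}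
        ⊆ {ω | 5 * L ≤ X i j ω} := by
      intro ω hω
      have := hdeg j ω i
      simp only [Set.mem_setOf_eq] at hω ⊢
      linarith
    refine le_trans (measure_mono hsub) ?_
    have he1 : (1:ℝ) ≤ Real.exp 1 := by linarith [Real.add_one_le_exp 1]
    refine le_trans (Statement18Aux.chernoff_ub P.μ (V i) (C i j) (hCmeas i j)
      (hCint i j) (Real.exp 1) (5 * L) he1) (ENNReal.ofReal_le_ofReal ?_)
    rw [Real.exp_one_rpow]
    have hprod : ∏ v ∈ V i, (1 + (Real.exp 1 - 1) * (P.μ (C i j v)).toReal)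
        ≤ Real.exp (∑ v ∈ V i, (Real.exp 1 - 1) * (P.μ (C i j v)).toReal) := by
      rw [Real.exp_sum]
      apply Finset.prod_le_prod
      · intro v _
        have h0 : (0:ℝ) ≤ (P.μ (C i j v)).toReal := ENNReal.toReal_nonneg
        have h1 : (0:ℝ) ≤ (Real.exp 1 - 1) * (P.μ (C i j v)).toReal :=
          mul_nonneg (by linarith [Real.add_one_le_exp 1]) h0
        linarith
      · intro v _
        linarith [Real.add_one_le_exp ((Real.exp 1 - 1) * (P.μ (C i j v)).toReal)]
    have hsumb : ∑ v ∈ V i, (Real.exp 1 - 1) * (P.μ (C i j v)).toReal ≤ 4 * c := by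
      rw [← Finset.mul_sum]
      have h1 := hsum_p_ub i j hwc
      have h2 : Real.exp 1 - 1 ≤ 2 := by linarith [Real.exp_one_lt_d9]
      have h3 : (0:ℝ) ≤ ∑ v ∈ V i, (P.μ (C i j v)).toReal :=
        Finset.sum_nonneg fun v _ => ENNReal.toReal_nonneg
      have h4 : (Real.exp 1 - 1) * ∑ v ∈ V i, (P.μ (C i j v)).toReal
          ≤ 2 * ∑ v ∈ V i, (P.μ (C i j v)).toReal :=
        mul_le_mul_of_nonneg_right h2 h3
      linarith
    calc Real.exp (-(5 * L)) * ∏ v ∈ V i, (1 + (Real.exp 1 - 1) * (P.μ (C i j v)).toReal)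
        ≤ Real.exp (-(5 * L)) * Real.exp (4 * c) := by
          apply mul_le_mul_of_nonneg_left _ (Real.exp_nonneg _)
          exact le_trans hprod (Real.exp_le_exp.mpr hsumb)
      _ = Real.exp (-(5 * L) + 4 * c) := (Real.exp_add _ _).symm
      _ ≤ Real.exp (-(7/2) * L) := by
          apply Real.exp_le_exp.mpr
          linarith [hlogc]
  -- lower tail bound
  have hLB : ∀ i : Fin n, 15 / s * L < w i →
      P.μ {ω | (((P.G 0 ω).neighborSet i).ncard : ℝ) ≤ 5 * L}
        ≤ ENNReal.ofReal (Real.exp (-(7/2) * L)) := by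
    intro i hwi
    have hsub : {ω | (((P.G 0 ω).neighborSet i).ncard : ℝ) ≤ 5 * L}
        ⊆ {ω | X i 0 ω ≤ 5 * L} := by
      intro ω hω
      have := hdeg 0 ω i
      simp only [Set.mem_setOf_eq] at hω ⊢
      linarith
    refine le_trans (measure_mono hsub) ?_
    refine le_trans (Statement18Aux.chernoff_lb P.μ (V i) (C i 0) (hCmeas i 0)
      (hCint i 0) (1/2) (5 * L) (by norm_num) (by norm_num)) (ENNReal.ofReal_le_ofReal ?_)
    have hq : ((1:ℝ)/2) ^ (-(5 * L)) = Real.exp (5 * L * Real.log 2) := by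
      rw [Real.rpow_def_of_pos (by norm_num : (0:ℝ) < 1/2), one_div, Real.log_inv]
      ring_nf
    rw [hq]
    have hprod : ∏ v ∈ V i, (1 + ((1:ℝ)/2 - 1) * (P.μ (C i 0 v)).toReal)
        ≤ Real.exp (-(7 * L)) := by
      have hstep : ∏ v ∈ V i, (1 + ((1:ℝ)/2 - 1) * (P.μ (C i 0 v)).toReal)
          ≤ Real.exp (∑ v ∈ V i, (-(1:ℝ)/2) * (P.μ (C i 0 v)).toReal) := by
        rw [Real.exp_sum]
        apply Finset.prod_le_prod
        · intro v hv
          have h1 := hple1 i 0 v (Finset.mem_erase.mp hv).1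
          have h0 : (0:ℝ) ≤ (P.μ (C i 0 v)).toReal := ENNReal.toReal_nonneg
          linarith
        · intro v _
          have := Real.add_one_le_exp ((-(1:ℝ)/2) * (P.μ (C i 0 v)).toReal)
          linarith
      refine le_trans hstep (Real.exp_le_exp.mpr ?_)
      have h1 := hsum_p_lb i hwi
      have h2 : ∑ v ∈ V i, (-(1:ℝ)/2) * (P.μ (C i 0 v)).toReal
          = -(1:ℝ)/2 * ∑ v ∈ V i, (P.μ (C i 0 v)).toReal := by
        rw [Finset.mul_sum]
      rw [h2]
      linarith
    calc Real.exp (5 * L * Real.log 2)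
          * ∏ v ∈ V i, (1 + ((1:ℝ)/2 - 1) * (P.μ (C i 0 v)).toReal)
        ≤ Real.exp (5 * L * Real.log 2) * Real.exp (-(7 * L)) :=
          mul_le_mul_of_nonneg_left hprod (Real.exp_nonneg _)
      _ = Real.exp (5 * L * Real.log 2 + -(7 * L)) := (Real.exp_add _ _).symm
      _ ≤ Real.exp (-(7/2) * L) := by
          apply Real.exp_le_exp.mpr
          have h5 : 5 * Real.log 2 ≤ 7/2 := by linarith [Real.log_two_lt_d9]
          have h6 := mul_le_mul_of_nonneg_left h5 hL0
          linarith
  -- the bad events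
  set bnd := ENNReal.ofReal (Real.exp (-(7/2) * L)) with hbnd
  set Bad : Fin n → Set (Ω n) := fun i =>
    ({ω | w i ≤ c ∧ (5 * L < (((P.G 0 ω).neighborSet i).ncard : ℝ)
        ∨ 5 * L < (((P.G 1 ω).neighborSet i).ncard : ℝ))}
      ∪ {ω | ¬ (w i ≤ 15 / s * L) ∧ (((P.G 0 ω).neighborSet i).ncard : ℝ) ≤ 5 * L})
    with hBadDef
  have hBadLe : ∀ i : Fin n, P.μ (Bad i) ≤ 3 * bnd := by
    intro i
    refine le_trans (measure_union_le _ _) ?_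
    have hb1 : P.μ {ω | w i ≤ c ∧ (5 * L < (((P.G 0 ω).neighborSet i).ncard : ℝ)
        ∨ 5 * L < (((P.G 1 ω).neighborSet i).ncard : ℝ))} ≤ 2 * bnd := by
      by_cases hwc : w i ≤ c
      · refine le_trans (measure_mono (fun ω hω => hω.2 :
          _ ⊆ {ω | 5 * L < (((P.G 0 ω).neighborSet i).ncard : ℝ)}
            ∪ {ω | 5 * L < (((P.G 1 ω).neighborSet i).ncard : ℝ)})) ?_
        refine le_trans (measure_union_le _ _) ?_
        rw [two_mul]
        exact add_le_add (hUB i 0 hwc) (hUB i 1 hwc)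
      · have hempty : {ω : Ω n | w i ≤ c ∧ (5 * L < (((P.G 0 ω).neighborSet i).ncard : ℝ)
            ∨ 5 * L < (((P.G 1 ω).neighborSet i).ncard : ℝ))} = ∅ := by
          ext ω
          simp only [Set.mem_setOf_eq, Set.mem_empty_iff_false, iff_false]
          rintro ⟨h, _⟩
          exact hwc h
        rw [hempty, measure_empty]
        exact zero_le
    have hb2 : P.μ {ω | ¬ (w i ≤ 15 / s * L)
        ∧ (((P.G 0 ω).neighborSet i).ncard : ℝ) ≤ 5 * L} ≤ bnd := by
      by_cases hw15 : w i ≤ 15 / s * L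
      · have hempty : {ω : Ω n | ¬ (w i ≤ 15 / s * L)
            ∧ (((P.G 0 ω).neighborSet i).ncard : ℝ) ≤ 5 * L} = ∅ := by
          ext ω
          simp only [Set.mem_setOf_eq, Set.mem_empty_iff_false, iff_false]
          rintro ⟨h, _⟩
          exact h hw15
        rw [hempty, measure_empty]
        exact zero_le
      · exact le_trans (measure_mono (fun ω hω => hω.2)) (hLB i (lt_of_not_ge hw15))
    calc P.μ _ + P.μ _ ≤ 2 * bnd + bnd := add_le_add hb1 hb2
      _ = 3 * bnd := by ring
  -- the good event
  set E : Set (Ω n) := {ω | {i : Fin n | w i ≤ c} ⊆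
      {i : Fin n | (((P.G 0 ω).neighborSet i).ncard : ℝ) ≤ 5 * Real.log n ∧
        (((P.G 1 ω).neighborSet i).ncard : ℝ) ≤ 5 * Real.log n} ∧
      {i : Fin n | (((P.G 0 ω).neighborSet i).ncard : ℝ) ≤ 5 * Real.log n ∧
        (((P.G 1 ω).neighborSet i).ncard : ℝ) ≤ 5 * Real.log n} ⊆
      {i : Fin n | w i ≤ 15 / s * Real.log n}} with hEdef
  have hsub : (⋃ i : Fin n, Bad i)ᶜ ⊆ E := by
    intro ω hω
    simp only [Set.mem_compl_iff, Set.mem_iUnion, not_exists] at hω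
    constructor
    · intro i hi
      have hB := hω i
      simp only [hBadDef, Set.mem_union, Set.mem_setOf_eq, not_or, not_and] at hB
      have h1 := hB.1 hi
      push_neg at h1
      exact ⟨h1.1, h1.2⟩
    · intro i hi
      have hB := hω i
      simp only [hBadDef, Set.mem_union, Set.mem_setOf_eq, not_or, not_and] at hB
      by_contra hcon
      exact absurd hi.1 (not_le.mpr (by simpa using hB.2 hcon))
  have hEc : P.μ Eᶜ ≤ ENNReal.ofReal ((n:ℝ) ^ (ε - 2)) := by
    refine le_trans (measure_mono (Set.compl_subset_comm.mp hsub)) ?_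
    refine le_trans (measure_iUnion_fintype_le _ _) ?_
    refine le_trans (Finset.sum_le_sum fun i _ => hBadLe i) ?_
    rw [Finset.sum_const, Finset.card_univ, Fintype.card_fin, nsmul_eq_mul]
    have hconv : ((n : ℕ) : ENNReal) * (3 * bnd)
        = ENNReal.ofReal ((n:ℝ) * (3 * Real.exp (-(7/2) * L))) := by
      rw [hbnd, ENNReal.ofReal_mul (Nat.cast_nonneg n),
        ENNReal.ofReal_mul (by norm_num : (0:ℝ) ≤ 3), ENNReal.ofReal_natCast,
        ENNReal.ofReal_ofNat]
    rw [hconv]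
    apply ENNReal.ofReal_le_ofReal
    have hnexp : (n:ℝ) = Real.exp L := (Real.exp_log hn0).symm
    have hrp : (n:ℝ) ^ (ε - 2) = Real.exp (Real.log n * (ε - 2)) := Real.rpow_def_of_pos hn0 _
    rw [hrp, ← hLdef]
    have key : (n:ℝ) * (3 * Real.exp (-(7/2) * L)) = 3 * Real.exp (-(5/2) * L) := by
      rw [hnexp,
        show Real.exp L * (3 * Real.exp (-(7/2) * L))
          = 3 * (Real.exp L * Real.exp (-(7/2) * L)) by ring,
        ← Real.exp_add, show L + -(7/2) * L = -(5/2) * L by ring]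
    rw [key]
    have h3 : (3:ℝ) ≤ Real.exp (L * (ε - 2) + (5/2) * L) := by
      have hεL : 0 ≤ ε * L := mul_nonneg hε.le hL0
      have harg : 2 ≤ L * (ε - 2) + (5/2) * L := by linarith
      calc (3:ℝ) = 2 + 1 := by norm_num
        _ ≤ Real.exp 2 := Real.add_one_le_exp 2
        _ ≤ Real.exp (L * (ε - 2) + (5/2) * L) := Real.exp_le_exp.mpr harg
    calc 3 * Real.exp (-(5/2) * L)
        ≤ Real.exp (L * (ε - 2) + (5/2) * L) * Real.exp (-(5/2) * L) :=
          mul_le_mul_of_nonneg_right h3 (Real.exp_nonneg _)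
      _ = Real.exp (L * (ε - 2)) := by
          rw [← Real.exp_add]
          congr 1
          ring
  show 1 - (n:ℝ) ^ (ε - 2) ≤ (P.μ E).toReal
  have hfin1 : P.μ E ≠ ⊤ := measure_ne_top _ _
  have hfin2 : P.μ Eᶜ ≠ ⊤ := measure_ne_top _ _
  have h1 : (1 : ENNReal) ≤ P.μ E + P.μ Eᶜ := by
    calc (1 : ENNReal) = P.μ Set.univ := (measure_univ).symm
      _ = P.μ (E ∪ Eᶜ) := by rw [Set.union_compl_self]
      _ ≤ P.μ E + P.μ Eᶜ := measure_union_le _ _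
  have h2 : (1:ℝ) ≤ (P.μ E).toReal + (P.μ Eᶜ).toReal := by
    have h3 := ENNReal.toReal_mono (ENNReal.add_ne_top.mpr ⟨hfin1, hfin2⟩) h1
    rw [ENNReal.toReal_one, ENNReal.toReal_add hfin1 hfin2] at h3
    exact h3
  have h4 : (P.μ Eᶜ).toReal ≤ (n:ℝ) ^ (ε - 2) :=
    ENNReal.toReal_le_of_le_ofReal (Real.rpow_nonneg hn0.le _) hEc
  linarith

end
end

section
/- For every real number x with 1 < x < 2, one has (5/2)^x − (3/4)^x < 2·(2^x − 1). -/
set_option maxHeartbeats 1000000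

theorem statement_19 (x : ℝ) (h1 : 1 < x) (h2 : x < 2) :
    (5/2 : ℝ) ^ x - (3/4 : ℝ) ^ x < 2 * ((2 : ℝ) ^ x - 1) := by
  obtain ⟨t, rfl⟩ : ∃ t : ℝ, x = 1 + t := ⟨x - 1, by ring⟩
  have ht0 : 0 < t := by linarith
  have ht1 : t < 1 := by linarith
  have hx : (1:ℝ) + t = 1 + t := rfl
  -- log bounds
  have hL5 : Real.log (5/2) < 0.92 := by
    rw [Real.log_lt_iff_lt_exp (by norm_num)]
    have h := Real.sum_le_exp_of_nonneg (by norm_num : (0:ℝ) ≤ 0.92) 5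
    have h' : (5/2:ℝ) < ∑ i ∈ Finset.range 5, (0.92:ℝ)^i / i.factorial := by
      norm_num [Finset.sum_range_succ, Nat.factorial]
    linarith
  have hL3 : Real.log (4/3) < 0.29 := by
    rw [Real.log_lt_iff_lt_exp (by norm_num)]
    have h := Real.sum_le_exp_of_nonneg (by norm_num : (0:ℝ) ≤ 0.29) 4
    have h' : (4/3:ℝ) < ∑ i ∈ Finset.range 4, (0.29:ℝ)^i / i.factorial := by
      norm_num [Finset.sum_range_succ, Nat.factorial]
    linarith
  have hL2 : (0.6931:ℝ) < Real.log 2 := by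
    have := Real.log_two_gt_d9; linarith
  -- rewrite powers
  have h5pos : (0:ℝ) < 5/2 := by norm_num
  have h3pos : (0:ℝ) < 3/4 := by norm_num
  have h2pos : (0:ℝ) < 2 := by norm_num
  have e5 : (5/2:ℝ)^((1:ℝ)+t) = 5/2 * Real.exp (Real.log (5/2) * t) := by
    rw [Real.rpow_add h5pos, Real.rpow_one, Real.rpow_def_of_pos h5pos]
  have e3 : (3/4:ℝ)^((1:ℝ)+t) = 3/4 * Real.exp (Real.log (3/4) * t) := by
    rw [Real.rpow_add h3pos, Real.rpow_one, Real.rpow_def_of_pos h3pos]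
  have e2 : (2:ℝ)^((1:ℝ)+t) = 2 * Real.exp (Real.log 2 * t) := by
    rw [Real.rpow_add h2pos, Real.rpow_one, Real.rpow_def_of_pos h2pos]
  -- upper bound for exp(log(5/2)*t)
  have b5 : Real.exp (Real.log (5/2) * t) ≤
      1 + 0.92*t + (0.92*t)^2/2 + (0.92*t)^3/6 + (0.92*t)^4 * 5/96 := by
    have hmono : Real.exp (Real.log (5/2) * t) ≤ Real.exp (0.92 * t) :=
      Real.exp_le_exp.2 (by nlinarith)
    have hb := Real.exp_bound' (x := 0.92*t) (by positivity) (by nlinarith)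
      (n := 4) (by norm_num)
    have hs : (∑ m ∈ Finset.range 4, (0.92*t)^m / m.factorial) +
        (0.92*t)^4 * (4+1) / ((Nat.factorial 4) * 4) =
        1 + 0.92*t + (0.92*t)^2/2 + (0.92*t)^3/6 + (0.92*t)^4 * 5/96 := by
      norm_num [Finset.sum_range_succ, Nat.factorial]
    linarith [hb, hs.ge, hs.le]
  -- lower bound for exp(log 2 * t)
  have b2 : 1 + 0.6931*t + (0.6931*t)^2/2 + (0.6931*t)^3/6 ≤
      Real.exp (Real.log 2 * t) := by
    have hmono : Real.exp (0.6931 * t) ≤ Real.exp (Real.log 2 * t) :=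
      Real.exp_le_exp.2 (by nlinarith)
    have hb := Real.sum_le_exp_of_nonneg (show (0:ℝ) ≤ 0.6931*t by positivity) 4
    have hs : (∑ m ∈ Finset.range 4, (0.6931*t)^m / m.factorial) =
        1 + 0.6931*t + (0.6931*t)^2/2 + (0.6931*t)^3/6 := by
      norm_num [Finset.sum_range_succ, Nat.factorial]
    linarith [hb, hs.ge]
  -- lower bound for exp(log(3/4)*t)
  have b3 : 1 - 0.29*t ≤ Real.exp (Real.log (3/4) * t) := by
    have hlog : Real.log (3/4) = -Real.log (4/3) := by
      rw [← Real.log_inv]; norm_num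
    have h := Real.add_one_le_exp (Real.log (3/4) * t)
    have hpos : 0 ≤ Real.log (4/3) := Real.log_nonneg (by norm_num)
    nlinarith
  rw [e5, e3, e2]
  have ht2 : t^2 ≤ t := by nlinarith
  have ht3 : t^3 ≤ t^2 := by nlinarith
  have ht4 : t^4 ≤ t^2 := by nlinarith
  have key : 4*(1+0.6931*t+(0.6931*t)^2/2+(0.6931*t)^3/6) - 2 + 3/4*(1-0.29*t)
      - 5/2*(1 + 0.92*t + (0.92*t)^2/2 + (0.92*t)^3/6 + (0.92*t)^4 * 5/96) > 0 := by
    nlinarith [ht3, ht4, mul_pos ht0 (show (0:ℝ) < 1 - t by linarith)]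
  linarith [b5, b2, b3, key]
end
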